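/- arXiv:math/0604515 — 4 statements merged into one kernel-verified Lean document; each statement's English description precedes it below -/
import Mathlib

section
/- Let s ≥ 1 and let β, γ be sequences in ℓ²_s (i.e., ∑ n^s |β_n|² < ∞). Define η_n := ∑_{k=n}^∞ β_k γ_k. Then η ∈ ℓ²_s and ‖η‖_{ℓ²_s} ≤ ‖β‖_{ℓ²_s} ‖γ‖_{ℓ²_s}. -/
open scoped BigOperators

lemma tsum_cauchy_schwarz (a b : ℕ → ℝ) (ha0 : ∀ k, 0 ≤ a k) (hb0 : ∀ k, 0 ≤ b k)
    (ha : Summable fun k => a k ^ 2) (hb : Summable fun k => b k ^ 2) :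
    (∑' k, a k * b k) ^ 2 ≤ (∑' k, a k ^ 2) * (∑' k, b k ^ 2) := by
  have hA : 0 ≤ ∑' k, a k ^ 2 := tsum_nonneg fun k => sq_nonneg _
  have hB : 0 ≤ ∑' k, b k ^ 2 := tsum_nonneg fun k => sq_nonneg _
  have hab : Summable fun k => a k * b k := by
    refine Summable.of_nonneg_of_le (fun k => mul_nonneg (ha0 k) (hb0 k)) (fun k => ?_)
      ((ha.add hb).div_const 2)
    nlinarith [sq_nonneg (a k - b k)]
  have key : ∑' k, a k * b k ≤ Real.sqrt ((∑' k, a k ^ 2) * (∑' k, b k ^ 2)) := by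
    refine Summable.tsum_le_of_sum_le hab fun u => ?_
    have h1 : (∑ k ∈ u, a k * b k) ^ 2 ≤ (∑ k ∈ u, a k ^ 2) * ∑ k ∈ u, b k ^ 2 :=
      Finset.sum_mul_sq_le_sq_mul_sq u a b
    have h2 : (∑ k ∈ u, a k ^ 2) ≤ ∑' k, a k ^ 2 := Summable.sum_le_tsum u (fun k _ => sq_nonneg _) ha
    have h3 : (∑ k ∈ u, b k ^ 2) ≤ ∑' k, b k ^ 2 := Summable.sum_le_tsum u (fun k _ => sq_nonneg _) hb
    have h5 : 0 ≤ ∑ k ∈ u, a k * b k := Finset.sum_nonneg fun k _ => mul_nonneg (ha0 k) (hb0 k)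
    have h6 : 0 ≤ ∑ k ∈ u, b k ^ 2 := Finset.sum_nonneg fun k _ => sq_nonneg _
    have h7 : (∑ k ∈ u, a k * b k) ^ 2 ≤ (∑' k, a k ^ 2) * ∑' k, b k ^ 2 :=
      h1.trans (mul_le_mul h2 h3 h6 hA)
    calc ∑ k ∈ u, a k * b k = Real.sqrt ((∑ k ∈ u, a k * b k) ^ 2) := (Real.sqrt_sq h5).symm
      _ ≤ _ := Real.sqrt_le_sqrt h7
  calc (∑' k, a k * b k) ^ 2 ≤ Real.sqrt ((∑' k, a k ^ 2) * (∑' k, b k ^ 2)) ^ 2 :=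
        pow_le_pow_left₀ (tsum_nonneg fun k => mul_nonneg (ha0 k) (hb0 k)) key 2
    _ = _ := Real.sq_sqrt (mul_nonneg hA hB)

set_option maxHeartbeats 2000000 in
/-- Tail-product lemma, `ℓ²_s` case: if `∑ n^s ‖β n‖² < ∞` and likewise for `γ`
(`s ≥ 1`), then `η n = ∑_{k≥n} β k * γ k` lies in `ℓ²_s` with
`‖η‖ ≤ ‖β‖ ‖γ‖` (stated with squared norms). -/
theorem tail_product_l2s (s : ℝ) (hs : 1 ≤ s) (β γ : ℕ → ℂ)
    (hβ : Summable fun n : ℕ => (n : ℝ) ^ s * ‖β n‖ ^ 2)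
    (hγ : Summable fun n : ℕ => (n : ℝ) ^ s * ‖γ n‖ ^ 2) :
    (Summable fun n : ℕ => (n : ℝ) ^ s * ‖∑' k : ℕ, β (n + k) * γ (n + k)‖ ^ 2) ∧
      (∑' n : ℕ, (n : ℝ) ^ s * ‖∑' k : ℕ, β (n + k) * γ (n + k)‖ ^ 2) ≤
        (∑' n : ℕ, (n : ℝ) ^ s * ‖β n‖ ^ 2) * (∑' n : ℕ, (n : ℝ) ^ s * ‖γ n‖ ^ 2) := by
  have hs0 : (0:ℝ) ≤ s := le_trans zero_le_one hs
  have hsne : s ≠ 0 := by linarith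
  set A := ∑' n : ℕ, (n : ℝ) ^ s * ‖β n‖ ^ 2 with hAdef
  set B := ∑' n : ℕ, (n : ℝ) ^ s * ‖γ n‖ ^ 2 with hBdef
  have hβ0 : ∀ n : ℕ, 0 ≤ (n : ℝ) ^ s * ‖β n‖ ^ 2 :=
    fun n => mul_nonneg (Real.rpow_nonneg (Nat.cast_nonneg n) s) (sq_nonneg _)
  have hγ0 : ∀ n : ℕ, 0 ≤ (n : ℝ) ^ s * ‖γ n‖ ^ 2 :=
    fun n => mul_nonneg (Real.rpow_nonneg (Nat.cast_nonneg n) s) (sq_nonneg _)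
  have hA0 : 0 ≤ A := tsum_nonneg hβ0
  have hB0 : 0 ≤ B := tsum_nonneg hγ0
  -- the weight w m := m^{-s} ‖γ m‖²
  set w : ℕ → ℝ := fun m => (m : ℝ) ^ (-s) * ‖γ m‖ ^ 2 with hwdef
  have hw0 : ∀ m, 0 ≤ w m :=
    fun m => mul_nonneg (Real.rpow_nonneg (Nat.cast_nonneg m) _) (sq_nonneg _)
  have hwle : ∀ m : ℕ, w m ≤ (m : ℝ) ^ s * ‖γ m‖ ^ 2 := by
    intro m
    rcases Nat.eq_zero_or_pos m with rfl | hm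
    · simp [w, Real.zero_rpow hsne, Real.zero_rpow (neg_ne_zero.mpr hsne)]
    · refine mul_le_mul_of_nonneg_right ?_ (sq_nonneg _)
      exact Real.rpow_le_rpow_of_exponent_le (by exact_mod_cast hm) (by linarith)
  have hw : Summable w := Summable.of_nonneg_of_le hw0 hwle hγ
  -- squares are summable
  have hβsq : Summable fun m : ℕ => ‖β m‖ ^ 2 := by
    rw [← summable_nat_add_iff 1]
    refine Summable.of_nonneg_of_le (fun k => sq_nonneg _) (fun k => ?_)
      ((summable_nat_add_iff 1).mpr hβ)
    have h1 : (1:ℝ) ≤ ((k+1 : ℕ) : ℝ) ^ s :=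
      Real.one_le_rpow (by exact_mod_cast Nat.succ_le_succ (Nat.zero_le k)) hs0
    nlinarith [sq_nonneg ‖β (k+1)‖]
  have hγsq : Summable fun m : ℕ => ‖γ m‖ ^ 2 := by
    rw [← summable_nat_add_iff 1]
    refine Summable.of_nonneg_of_le (fun k => sq_nonneg _) (fun k => ?_)
      ((summable_nat_add_iff 1).mpr hγ)
    have h1 : (1:ℝ) ≤ ((k+1 : ℕ) : ℝ) ^ s :=
      Real.one_le_rpow (by exact_mod_cast Nat.succ_le_succ (Nat.zero_le k)) hs0
    nlinarith [sq_nonneg ‖γ (k+1)‖]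
  -- tail weights T n
  set T : ℕ → ℝ := fun n => ∑' k : ℕ, w (n + k) with hTdef
  have hT0 : ∀ n, 0 ≤ T n := fun n => tsum_nonneg fun k => hw0 _
  have hwshift : ∀ n : ℕ, Summable fun k : ℕ => w (n + k) := by
    intro n
    simpa [add_comm] using (summable_nat_add_iff n).mpr hw
  -- Step 1: pointwise bound  n^s ‖η n‖² ≤ A * (n^s * T n)
  have hpoint : ∀ n : ℕ, (n : ℝ) ^ s * ‖∑' k : ℕ, β (n + k) * γ (n + k)‖ ^ 2 ≤
      A * ((n : ℝ) ^ s * T n) := by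
    intro n
    rcases Nat.eq_zero_or_pos n with rfl | hn
    · simp [Real.zero_rpow hsne]
    have hn1 : (1:ℝ) ≤ (n : ℝ) := by exact_mod_cast hn
    set a : ℕ → ℝ := fun k => ((n + k : ℕ) : ℝ) ^ (s/2) * ‖β (n + k)‖ with hadef
    set b : ℕ → ℝ := fun k => ((n + k : ℕ) : ℝ) ^ (-(s/2)) * ‖γ (n + k)‖ with hbdef
    have hx : ∀ k : ℕ, (0:ℝ) < ((n + k : ℕ) : ℝ) := by
      intro k
      exact_mod_cast Nat.lt_of_lt_of_le hn (Nat.le_add_right n k)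
    have ha0 : ∀ k, 0 ≤ a k := fun k => mul_nonneg (Real.rpow_nonneg (hx k).le _) (norm_nonneg _)
    have hb0 : ∀ k, 0 ≤ b k := fun k => mul_nonneg (Real.rpow_nonneg (hx k).le _) (norm_nonneg _)
    have hab : ∀ k, a k * b k = ‖β (n + k)‖ * ‖γ (n + k)‖ := by
      intro k
      have : ((n + k : ℕ) : ℝ) ^ (s/2) * ((n + k : ℕ) : ℝ) ^ (-(s/2)) = 1 := by
        rw [← Real.rpow_add (hx k)]; simp
      calc a k * b k = (((n + k : ℕ) : ℝ) ^ (s/2) * ((n + k : ℕ) : ℝ) ^ (-(s/2))) *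
            (‖β (n + k)‖ * ‖γ (n + k)‖) := by ring
        _ = _ := by rw [this, one_mul]
    have hasq : ∀ k, a k ^ 2 = ((n + k : ℕ) : ℝ) ^ s * ‖β (n + k)‖ ^ 2 := by
      intro k
      rw [hadef, mul_pow, sq (((n + k : ℕ) : ℝ) ^ (s/2)), ← Real.rpow_add (hx k), add_halves]
    have hbsq : ∀ k, b k ^ 2 = w (n + k) := by
      intro k
      have he : -(s/2) + -(s/2) = -s := by ring
      rw [hbdef, mul_pow, sq (((n + k : ℕ) : ℝ) ^ (-(s/2))), ← Real.rpow_add (hx k), he]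
    have haS : Summable fun k => a k ^ 2 := by
      simp only [hasq]
      simpa [add_comm] using (summable_nat_add_iff n).mpr hβ
    have hbS : Summable fun k => b k ^ 2 := by
      simp only [hbsq]; exact hwshift n
    -- ‖η n‖ ≤ ∑' k, a k * b k
    have hprod : Summable fun k => ‖β (n + k) * γ (n + k)‖ := by
      have h1 : Summable fun k => ‖β (n + k)‖ ^ 2 := by
        simpa [add_comm] using (summable_nat_add_iff n).mpr hβsq
      have h2 : Summable fun k => ‖γ (n + k)‖ ^ 2 := by
        simpa [add_comm] using (summable_nat_add_iff n).mpr hγsq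
      refine Summable.of_nonneg_of_le (fun k => norm_nonneg _) (fun k => ?_)
        ((h1.add h2).div_const 2)
      rw [norm_mul]
      nlinarith [sq_nonneg (‖β (n+k)‖ - ‖γ (n+k)‖), norm_nonneg (β (n+k)), norm_nonneg (γ (n+k))]
    have hη1 : ‖∑' k : ℕ, β (n + k) * γ (n + k)‖ ≤ ∑' k, a k * b k := by
      refine (norm_tsum_le_tsum_norm hprod).trans ?_
      refine le_of_eq (tsum_congr fun k => ?_)
      rw [hab k, norm_mul]
    have hη2 : ‖∑' k : ℕ, β (n + k) * γ (n + k)‖ ^ 2 ≤ (∑' k, a k ^ 2) * (∑' k, b k ^ 2) :=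
      le_trans (pow_le_pow_left₀ (norm_nonneg _) hη1 2)
        (tsum_cauchy_schwarz a b ha0 hb0 haS hbS)
    have htail : (∑' k, a k ^ 2) ≤ A := by
      rw [hAdef]
      refine Summable.tsum_le_tsum_of_inj (fun k => n + k) (add_right_injective n)
        (fun c _ => hβ0 c) (fun k => le_of_eq (hasq k)) haS hβ
    have hTeq : (∑' k, b k ^ 2) = T n := tsum_congr hbsq
    calc (n : ℝ) ^ s * ‖∑' k : ℕ, β (n + k) * γ (n + k)‖ ^ 2
        ≤ (n : ℝ) ^ s * ((∑' k, a k ^ 2) * (∑' k, b k ^ 2)) := by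
          exact mul_le_mul_of_nonneg_left hη2 (Real.rpow_nonneg (Nat.cast_nonneg n) s)
      _ ≤ (n : ℝ) ^ s * (A * T n) := by
          rw [hTeq]
          exact mul_le_mul_of_nonneg_left
            (mul_le_mul_of_nonneg_right htail (hT0 n))
            (Real.rpow_nonneg (Nat.cast_nonneg n) s)
      _ = A * ((n : ℝ) ^ s * T n) := by ring
  -- Step 2: double-sum estimate
  set u : ℕ × ℕ → ℝ := fun p => if p.2 ≤ p.1 then (p.2 : ℝ) ^ s * w p.1 else 0 with hudef
  have hu0 : ∀ p, 0 ≤ u p := by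
    intro p
    dsimp only [u]
    split
    · exact mul_nonneg (Real.rpow_nonneg (Nat.cast_nonneg _) s) (hw0 _)
    · exact le_refl 0
  have hurow : ∀ m : ℕ, Summable fun j => u (m, j) := by
    intro m
    refine summable_of_ne_finset_zero (s := Finset.range (m+1)) fun j hj => ?_
    have : ¬ j ≤ m := by simpa [Nat.lt_succ_iff] using hj
    simp [u, this]
  have hrow_val : ∀ m : ℕ, (∑' j, u (m, j)) = (∑ j ∈ Finset.range (m+1), (j : ℝ) ^ s) * w m := by
    intro m
    rw [tsum_eq_sum (s := Finset.range (m+1)) (fun j hj => by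
      have : ¬ j ≤ m := by simpa [Nat.lt_succ_iff] using hj
      simp [u, this])]
    rw [Finset.sum_mul]
    refine Finset.sum_congr rfl fun j hj => ?_
    have : j ≤ m := Nat.lt_succ_iff.mp (Finset.mem_range.mp hj)
    simp [u, this]
  have hrow_le : ∀ m : ℕ, (∑' j, u (m, j)) ≤ (m : ℝ) ^ s * ‖γ m‖ ^ 2 := by
    intro m
    rw [hrow_val m]
    rcases Nat.eq_zero_or_pos m with rfl | hm
    · simp [Real.zero_rpow hsne, w, Real.zero_rpow (neg_ne_zero.mpr hsne)]
    have hm1 : (1:ℝ) ≤ (m : ℝ) := by exact_mod_cast hm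
    have hmpos : (0:ℝ) < (m : ℝ) := by linarith
    have hsum : (∑ j ∈ Finset.range (m+1), (j : ℝ) ^ s) ≤ (m : ℝ) * (m : ℝ) ^ s := by
      rw [Finset.sum_range_succ']
      have h0 : ((0:ℕ) : ℝ) ^ s = 0 := by
        simp [Real.zero_rpow hsne]
      rw [h0, add_zero]
      calc (∑ i ∈ Finset.range m, ((i + 1 : ℕ) : ℝ) ^ s)
          ≤ ∑ i ∈ Finset.range m, (m : ℝ) ^ s := by
            refine Finset.sum_le_sum fun i hi => ?_
            refine Real.rpow_le_rpow (Nat.cast_nonneg _) ?_ hs0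
            exact_mod_cast Nat.succ_le_of_lt (Finset.mem_range.mp hi)
        _ = (m : ℝ) * (m : ℝ) ^ s := by
            rw [Finset.sum_const, Finset.card_range, nsmul_eq_mul]
    calc (∑ j ∈ Finset.range (m+1), (j : ℝ) ^ s) * w m
        ≤ ((m : ℝ) * (m : ℝ) ^ s) * w m := mul_le_mul_of_nonneg_right hsum (hw0 m)
      _ = (m : ℝ) * (((m : ℝ) ^ s * (m : ℝ) ^ (-s)) * ‖γ m‖ ^ 2) := by
          simp only [w]; ring
      _ = (m : ℝ) * ‖γ m‖ ^ 2 := by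
          rw [← Real.rpow_add hmpos]
          simp
      _ ≤ (m : ℝ) ^ s * ‖γ m‖ ^ 2 := by
          refine mul_le_mul_of_nonneg_right ?_ (sq_nonneg _)
          calc (m : ℝ) = (m : ℝ) ^ (1:ℝ) := (Real.rpow_one _).symm
            _ ≤ (m : ℝ) ^ s := Real.rpow_le_rpow_of_exponent_le hm1 hs
  have hrowS : Summable fun m => ∑' j, u (m, j) :=
    Summable.of_nonneg_of_le (fun m => tsum_nonneg fun j => hu0 _) hrow_le hγ
  have huS : Summable u := (summable_prod_of_nonneg hu0).mpr ⟨hurow, hrowS⟩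
  have hu_tsum_le : (∑' p, u p) ≤ B := by
    rw [Summable.tsum_prod' huS hurow]
    exact Summable.tsum_le_tsum hrow_le hrowS hγ
  -- F
  set F : ℕ × ℕ → ℝ := fun p => (p.1 : ℝ) ^ s * w (p.1 + p.2) with hFdef
  have hF0 : ∀ p, 0 ≤ F p :=
    fun p => mul_nonneg (Real.rpow_nonneg (Nat.cast_nonneg _) s) (hw0 _)
  have hFeq : ∀ p : ℕ × ℕ, F p = u (p.1 + p.2, p.1) := by
    intro p
    simp [F, u, Nat.le_add_right]
  have e_inj : Function.Injective (fun p : ℕ × ℕ => ((p.1 + p.2, p.1) : ℕ × ℕ)) := by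
    intro p q h
    simp only [Prod.mk.injEq] at h
    obtain ⟨h1, h2⟩ := h
    exact Prod.ext h2 (by omega)
  have hFS : Summable F := by
    have h := huS.comp_injective e_inj
    exact h.congr fun p => (hFeq p).symm
  have hFrow : ∀ n : ℕ, Summable fun k => F (n, k) := by
    intro n
    have := (hwshift n).mul_left ((n : ℝ) ^ s)
    exact this.congr fun k => rfl
  have hmidS : Summable fun n : ℕ => (n : ℝ) ^ s * T n := by
    have h := ((summable_prod_of_nonneg hF0).mp hFS).2
    refine h.congr fun n => ?_
    simp only [F, T]
    exact tsum_mul_left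
  have hmid_le : (∑' n : ℕ, (n : ℝ) ^ s * T n) ≤ B := by
    have h1 : (∑' n : ℕ, (n : ℝ) ^ s * T n) = ∑' p, F p := by
      rw [Summable.tsum_prod' hFS hFrow]
      refine tsum_congr fun n => ?_
      simp only [F, T]
      exact tsum_mul_left.symm
    have h2 : (∑' p, F p) ≤ ∑' p, u p :=
      Summable.tsum_le_tsum_of_inj _ e_inj (fun c _ => hu0 c)
        (fun p => le_of_eq (hFeq p)) hFS huS
    rw [h1]
    exact h2.trans hu_tsum_le
  -- conclusion
  have hfinalS : Summable fun n : ℕ => (n : ℝ) ^ s * ‖∑' k : ℕ, β (n + k) * γ (n + k)‖ ^ 2 :=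
    Summable.of_nonneg_of_le
      (fun n => mul_nonneg (Real.rpow_nonneg (Nat.cast_nonneg n) s) (sq_nonneg _))
      hpoint (hmidS.mul_left A)
  refine ⟨hfinalS, ?_⟩
  calc (∑' n : ℕ, (n : ℝ) ^ s * ‖∑' k : ℕ, β (n + k) * γ (n + k)‖ ^ 2)
      ≤ ∑' n : ℕ, A * ((n : ℝ) ^ s * T n) :=
        Summable.tsum_le_tsum hpoint hfinalS (hmidS.mul_left A)
    _ = A * ∑' n : ℕ, (n : ℝ) ^ s * T n := tsum_mul_left
    _ ≤ A * B := mul_le_mul_of_nonneg_left hmid_le hA0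
end

section
/- Let s ≥ 1 and let β, γ be sequences in ℓ¹_s (i.e., ∑ n^s |β_n| < ∞). Define η_n := ∑_{k=n}^∞ β_k γ_k. Then η ∈ ℓ¹_s and ‖η‖_{ℓ¹_s} ≤ ‖β‖_{ℓ¹_s} ‖γ‖_{ℓ¹_s}. -/
open scoped BigOperators

/-- Tail-product lemma, `ℓ¹_s` case: if `∑ n^s ‖β n‖ < ∞` and likewise for `γ`
(`s ≥ 1`), then `η n = ∑_{k≥n} β k * γ k` lies in `ℓ¹_s` with `‖η‖ ≤ ‖β‖ ‖γ‖`. -/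
theorem tail_product_l1s (s : ℝ) (hs : 1 ≤ s) (β γ : ℕ → ℂ)
    (hβ : Summable fun n : ℕ => (n : ℝ) ^ s * ‖β n‖)
    (hγ : Summable fun n : ℕ => (n : ℝ) ^ s * ‖γ n‖) :
    (Summable fun n : ℕ => (n : ℝ) ^ s * ‖∑' k : ℕ, β (n + k) * γ (n + k)‖) ∧
      (∑' n : ℕ, (n : ℝ) ^ s * ‖∑' k : ℕ, β (n + k) * γ (n + k)‖) ≤
        (∑' n : ℕ, (n : ℝ) ^ s * ‖β n‖) * (∑' n : ℕ, (n : ℝ) ^ s * ‖γ n‖) := by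
  have hs0 : (0:ℝ) ≤ s := le_trans zero_le_one hs
  have hsne : s ≠ 0 := by linarith
  set a : ℕ → ℝ := fun n => ‖β n‖ with ha
  set b : ℕ → ℝ := fun n => ‖γ n‖ with hb
  have ha0 : ∀ n, 0 ≤ a n := fun n => norm_nonneg _
  have hb0 : ∀ n, 0 ≤ b n := fun n => norm_nonneg _
  -- `(n:ℝ)^s ≥ 1` for `n ≥ 1`
  have hrpow1 : ∀ n : ℕ, 1 ≤ n → (1:ℝ) ≤ (n:ℝ) ^ s := by
    intro n hn
    have : (1:ℝ) ≤ (n:ℝ) := by exact_mod_cast hn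
    exact Real.one_le_rpow this hs0
  -- `a` and `b` are summable
  have hA : Summable a := by
    rw [← summable_nat_add_iff 1]
    apply Summable.of_nonneg_of_le (fun n => ha0 _)
      (fun n => le_mul_of_one_le_left (ha0 _) (hrpow1 (n+1) (Nat.le_add_left _ _)))
    exact_mod_cast (summable_nat_add_iff 1).mpr hβ
  have hBs : Summable b := by
    rw [← summable_nat_add_iff 1]
    apply Summable.of_nonneg_of_le (fun n => hb0 _)
      (fun n => le_mul_of_one_le_left (hb0 _) (hrpow1 (n+1) (Nat.le_add_left _ _)))
    exact_mod_cast (summable_nat_add_iff 1).mpr hγ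
  set B : ℝ := ∑' n, b n with hBdef
  have hbB : ∀ n, b n ≤ B := fun n => Summable.le_tsum hBs n (fun j _ => hb0 j)
  have hab : Summable (fun m => a m * b m) :=
    Summable.of_nonneg_of_le (fun m => mul_nonneg (ha0 m) (hb0 m))
      (fun m => mul_le_mul_of_nonneg_left (hbB m) (ha0 m)) (hA.mul_right B)
  -- reindex the tail sum with an indicator
  have htail : ∀ n : ℕ, (∑' k : ℕ, a (n + k) * b (n + k)) =
      ∑' m : ℕ, (if n ≤ m then a m * b m else 0) := by
    intro n
    have hinj : Function.Injective (fun k : ℕ => n + k) := add_right_injective n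
    rw [← Function.Injective.tsum_eq hinj (f := fun m => if n ≤ m then a m * b m else 0)]
    · exact tsum_congr fun k => by simp
    · intro m hm
      simp only [Function.mem_support, ne_eq, ite_eq_right_iff, not_forall] at hm
      obtain ⟨h, -⟩ := hm
      exact ⟨m - n, Nat.add_sub_cancel' h⟩
  have habn : ∀ n : ℕ, Summable (fun k : ℕ => a (n + k) * b (n + k)) :=
    fun n => hab.comp_injective (add_right_injective n)
  -- the dominating kernel
  set g : ℕ → ℕ → ℝ := fun n m => (if n ≤ m then (n:ℝ)^s else 0) * (a m * b m) with hg
  have hg0 : ∀ n m, 0 ≤ g n m := by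
    intro n m
    simp only [hg]
    apply mul_nonneg _ (mul_nonneg (ha0 m) (hb0 m))
    split
    · positivity
    · exact le_rfl
  have hgsum : ∀ n, Summable (g n) := by
    intro n
    apply Summable.of_nonneg_of_le (hg0 n) _ (hab.mul_left ((n:ℝ)^s))
    intro m
    simp only [hg]
    split
    · exact le_rfl
    · simp only [zero_mul]
      exact mul_nonneg (Real.rpow_nonneg (Nat.cast_nonneg n) s)
        (mul_nonneg (ha0 m) (hb0 m))
  -- pointwise bound: n^s ‖η n‖ ≤ ∑' m, g n m
  have hpoint : ∀ n : ℕ, (n:ℝ)^s * ‖∑' k : ℕ, β (n + k) * γ (n + k)‖ ≤ ∑' m, g n m := by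
    intro n
    have h1 : ‖∑' k : ℕ, β (n + k) * γ (n + k)‖ ≤ ∑' k, a (n + k) * b (n + k) := by
      have := norm_tsum_le_tsum_norm (f := fun k : ℕ => β (n + k) * γ (n + k)) ?_
      · calc ‖∑' k : ℕ, β (n + k) * γ (n + k)‖ ≤ ∑' k : ℕ, ‖β (n + k) * γ (n + k)‖ := this
          _ = ∑' k, a (n + k) * b (n + k) := tsum_congr fun k => norm_mul _ _
      · have : (fun k : ℕ => ‖β (n + k) * γ (n + k)‖) = fun k => a (n+k) * b (n+k) := by
          funext k; exact norm_mul _ _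
        rw [this]; exact habn n
    calc (n:ℝ)^s * ‖∑' k : ℕ, β (n + k) * γ (n + k)‖
        ≤ (n:ℝ)^s * ∑' k, a (n + k) * b (n + k) :=
          mul_le_mul_of_nonneg_left h1 (by positivity)
      _ = (n:ℝ)^s * ∑' m : ℕ, (if n ≤ m then a m * b m else 0) := by rw [htail n]
      _ = ∑' m : ℕ, (n:ℝ)^s * (if n ≤ m then a m * b m else 0) := by rw [tsum_mul_left]
      _ = ∑' m, g n m := by
          apply tsum_congr; intro m
          by_cases h : n ≤ m <;> simp [hg, h, mul_comm]
  -- the dominating function and its sum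
  set Y : ℝ := ∑' n : ℕ, (n:ℝ)^s * ‖γ n‖ with hY
  have hbY : ∀ m : ℕ, (m:ℝ)^s * b m ≤ Y :=
    fun m => Summable.le_tsum hγ m (fun j _ => by positivity)
  have hβ' : Summable (fun n : ℕ => (n:ℝ)^s * a n) := hβ
  set D : ℕ → ℝ := fun m => ((m:ℝ)^s * (m:ℝ)^s) * (a m * b m) with hD
  have hDle : ∀ m, D m ≤ ((m:ℝ)^s * a m) * Y := by
    intro m
    have h : D m = ((m:ℝ)^s * a m) * ((m:ℝ)^s * b m) := by simp only [hD]; ring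
    rw [h]
    exact mul_le_mul_of_nonneg_left (hbY m) (by positivity)
  have hDsum : Summable D :=
    Summable.of_nonneg_of_le (fun m => by simp only [hD]; positivity) hDle (hβ'.mul_right Y)
  have hDtsum : ∑' m : ℕ, D m ≤ (∑' n : ℕ, (n:ℝ)^s * ‖β n‖) * Y := by
    calc ∑' m : ℕ, D m ≤ ∑' m : ℕ, ((m:ℝ)^s * a m) * Y :=
          Summable.tsum_le_tsum hDle hDsum (hβ'.mul_right Y)
      _ = (∑' n : ℕ, (n:ℝ)^s * ‖β n‖) * Y := tsum_mul_right
  -- key finite-sum bound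
  have hkey : ∀ (N : ℕ) (m : ℕ), ∑ n ∈ Finset.range N, g n m ≤ D m := by
    intro N m
    have hfac : ∑ n ∈ Finset.range N, g n m =
        (∑ n ∈ Finset.range N, if n ≤ m then (n:ℝ)^s else 0) * (a m * b m) := by
      rw [Finset.sum_mul]
    rw [hfac]
    simp only [hD]
    apply mul_le_mul_of_nonneg_right _ (mul_nonneg (ha0 m) (hb0 m))
    -- ∑_{n < N, n ≤ m} n^s ≤ m^s * m^s
    have step1 : ∑ n ∈ Finset.range N, (if n ≤ m then (n:ℝ)^s else 0)
        ≤ ∑ n ∈ Finset.range (m+1), (n:ℝ)^s := by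
      calc ∑ n ∈ Finset.range N, (if n ≤ m then (n:ℝ)^s else 0)
          ≤ ∑ n ∈ Finset.range (max N (m+1)), (if n ≤ m then (n:ℝ)^s else 0) := by
            apply Finset.sum_le_sum_of_subset_of_nonneg
            · exact Finset.range_subset_range.mpr (le_max_left _ _)
            · intro i _ _; split
              · positivity
              · exact le_rfl
        _ = ∑ n ∈ Finset.range (m+1), (if n ≤ m then (n:ℝ)^s else 0) := by
            refine (Finset.sum_subset (Finset.range_subset_range.mpr (le_max_right _ _)) ?_).symm
            intro x _ hx
            simp only [Finset.mem_range, not_lt] at hx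
            rw [if_neg (by omega)]
        _ = ∑ n ∈ Finset.range (m+1), (n:ℝ)^s := by
            apply Finset.sum_congr rfl
            intro x hx
            simp only [Finset.mem_range] at hx
            rw [if_pos (by omega)]
    have step2 : ∑ n ∈ Finset.range (m+1), (n:ℝ)^s ≤ (m:ℝ)^s * (m:ℝ)^s := by
      rcases Nat.eq_zero_or_pos m with hm | hm
      · subst hm
        simp [Real.zero_rpow hsne]
      · have h1 : ∑ n ∈ Finset.range (m+1), (n:ℝ)^s
            = (∑ i ∈ Finset.range m, ((i+1 : ℕ):ℝ)^s) + ((0:ℕ):ℝ)^s :=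
          Finset.sum_range_succ' _ m
        have h2 : ∑ i ∈ Finset.range m, ((i+1 : ℕ):ℝ)^s ≤ (m:ℝ) * (m:ℝ)^s := by
          calc ∑ i ∈ Finset.range m, ((i+1 : ℕ):ℝ)^s ≤ ∑ _i ∈ Finset.range m, (m:ℝ)^s := by
                apply Finset.sum_le_sum
                intro i hi
                simp only [Finset.mem_range] at hi
                apply Real.rpow_le_rpow (by positivity) _ hs0
                exact_mod_cast hi
            _ = (m:ℝ) * (m:ℝ)^s := by rw [Finset.sum_const, Finset.card_range]; ring
        have h3 : (m:ℝ) ≤ (m:ℝ)^s := by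
          nth_rewrite 1 [← Real.rpow_one (m:ℝ)]
          apply Real.rpow_le_rpow_of_exponent_le _ hs
          exact_mod_cast hm
        have h4 : (m:ℝ) * (m:ℝ)^s ≤ (m:ℝ)^s * (m:ℝ)^s :=
          mul_le_mul_of_nonneg_right h3 (by positivity)
        rw [h1]
        simp only [Nat.cast_zero, Real.zero_rpow hsne, add_zero]
        exact le_trans h2 h4
    exact le_trans step1 step2
  -- partial sums of the target are bounded by the product
  set C : ℝ := (∑' n : ℕ, (n:ℝ)^s * ‖β n‖) * Y with hC
  have hbound : ∀ N : ℕ,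
      ∑ n ∈ Finset.range N, (n:ℝ)^s * ‖∑' k : ℕ, β (n + k) * γ (n + k)‖ ≤ C := by
    intro N
    calc ∑ n ∈ Finset.range N, (n:ℝ)^s * ‖∑' k : ℕ, β (n + k) * γ (n + k)‖
        ≤ ∑ n ∈ Finset.range N, ∑' m, g n m := Finset.sum_le_sum fun n _ => hpoint n
      _ = ∑' m, ∑ n ∈ Finset.range N, g n m :=
          (Summable.tsum_finsetSum fun n _ => hgsum n).symm
      _ ≤ ∑' m, D m :=
          Summable.tsum_le_tsum (hkey N) (summable_sum fun n _ => hgsum n) hDsum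
      _ ≤ C := hDtsum
  have hnonneg : ∀ n : ℕ, 0 ≤ (n:ℝ)^s * ‖∑' k : ℕ, β (n + k) * γ (n + k)‖ :=
    fun n => by positivity
  refine ⟨summable_of_sum_range_le hnonneg hbound, ?_⟩
  exact Real.tsum_le_of_sum_range_le hnonneg hbound
end

section
/- Suppose the Geronimus relations hold: a_{n+1}² = (1-α_{2n-1})(1-α_{2n}²)(1+α_{2n+1}) and b_{n+1} = (1-α_{2n-1})α_{2n} - (1+α_{2n-1})α_{2n-2} for all n ≥ 0, with α_n ∈ (-1,1) for n ≥ 0, α_{-1} = -1, and α, and hence b and a²-1, summable appropriately so that λ_n := -∑_{k>n} b_k and κ_n := -∑_{k>n}(a_k²-1) converge. Then κ_n = α_{2n-1} + K(α)_n and λ_n = α_{2n-2} + L(α)_n, where K(α)_n = ∑_{k=n}^∞ [α_{2k}² + α_{2k-1}α_{2k+1} - α_{2k}²(α_{2k-1} - α_{2k+1}) - α_{2k}²α_{2k-1}α_{2k+1}] and L(α)_n = ∑_{k=n}^∞ α_{2k-1}(α_{2k} + α_{2k-2}). -/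
/-!
Each summand of `K(α)` and `L(α)` is, by direct expansion, an increment of `α` along the odd
(resp. even) indices minus a term of the Jacobi tail `a² - 1` (resp. `b`). Summing from `n` to `N`
telescopes, and letting `N → ∞` the boundary term `α_{2N-1}` (resp. `α_{2N-2}`) vanishes.
-/

open scoped BigOperators
open Filter

/-- The summand of `K(α)` at index `k`. -/
def Kterm (α : ℤ → ℝ) (k : ℕ) : ℝ :=
  α (2 * (k : ℤ)) ^ 2 + α (2 * (k : ℤ) - 1) * α (2 * (k : ℤ) + 1)
    - α (2 * (k : ℤ)) ^ 2 * (α (2 * (k : ℤ) - 1) - α (2 * (k : ℤ) + 1))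
    - α (2 * (k : ℤ)) ^ 2 * α (2 * (k : ℤ) - 1) * α (2 * (k : ℤ) + 1)

/-- The summand of `L(α)` at index `k`. -/
def Lterm (α : ℤ → ℝ) (k : ℕ) : ℝ :=
  α (2 * (k : ℤ) - 1) * (α (2 * (k : ℤ)) + α (2 * (k : ℤ) - 2))

open Finset Topology

section Telescoping

variable {E : Type*} [AddCommGroup E]

theorem sum_Ico_eq_sub_sub_sum_Ioc {f g c : ℕ → E} (hfg : ∀ k, f k = g (k + 1) - g k - c (k + 1))
    {n N : ℕ} (hnN : n ≤ N) :
    ∑ k ∈ Ico n N, f k = g N - g n - ∑ k ∈ Ioc n N, c k := by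
  induction N, hnN using Nat.le_induction with
  | base => simp
  | succ N hnN ih =>
    rw [sum_Ico_succ_top hnN, sum_Ioc_succ_top hnN, ih, hfg]
    abel

variable [TopologicalSpace E] [IsTopologicalAddGroup E]

theorem tendsto_sum_Ico_of_eq_sub_sub {f g c : ℕ → E} {s : E}
    (hfg : ∀ k, f k = g (k + 1) - g k - c (k + 1)) (hg : Tendsto g atTop (𝓝 0)) (n : ℕ)
    (hc : Tendsto (fun N => ∑ k ∈ Ioc n N, c k) atTop (𝓝 (-s))) :
    Tendsto (fun N => ∑ k ∈ Ico n N, f k) atTop (𝓝 (s - g n)) := by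
  have hlim := (hg.sub_const (g n)).sub hc
  rw [show (0 : E) - g n - -s = s - g n by abel] at hlim
  refine hlim.congr' ?_
  filter_upwards [eventually_ge_atTop n] with N hnN
  exact (sum_Ico_eq_sub_sub_sum_Ioc hfg hnN).symm

end Telescoping

theorem tendsto_comp_two_mul_sub {X : Type*} {u : ℤ → X} {l : Filter X}
    (hu : Tendsto (fun n : ℕ => u n) atTop l) (c : ℤ) :
    Tendsto (fun N : ℕ => u (2 * N - c)) atTop l := by
  have hu' : Tendsto u atTop l := by
    rwa [← Nat.map_cast_int_atTop, tendsto_map'_iff]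
  exact hu'.comp <| tendsto_atTop_atTop.2 fun m => ⟨(m + c).toNat, fun N hN => by omega⟩

theorem Kterm_eq (α : ℤ → ℝ) (k : ℕ) :
    Kterm α k = α (2 * ((k + 1 : ℕ) : ℤ) - 1) - α (2 * k - 1) -
      ((1 - α (2 * k - 1)) * (1 - α (2 * k) ^ 2) * (1 + α (2 * k + 1)) - 1) := by
  rw [Kterm]
  push_cast
  ring_nf

theorem Lterm_eq (α : ℤ → ℝ) (k : ℕ) :
    Lterm α k = α (2 * ((k + 1 : ℕ) : ℤ) - 2) - α (2 * k - 2) -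
      ((1 - α (2 * k - 1)) * α (2 * k) - (1 + α (2 * k - 1)) * α (2 * k - 2)) := by
  rw [Lterm]
  push_cast
  ring_nf

theorem expanded_lambda_kappa_general (α : ℤ → ℝ) (a b lam kap : ℕ → ℝ)
    (hα0 : Tendsto (fun n : ℕ => α (n : ℤ)) atTop (nhds 0))
    (ha : ∀ n : ℕ, a (n + 1) ^ 2 =
      (1 - α (2 * (n : ℤ) - 1)) * (1 - α (2 * (n : ℤ)) ^ 2) * (1 + α (2 * (n : ℤ) + 1)))
    (hb : ∀ n : ℕ, b (n + 1) =
      (1 - α (2 * (n : ℤ) - 1)) * α (2 * (n : ℤ)) -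
        (1 + α (2 * (n : ℤ) - 1)) * α (2 * (n : ℤ) - 2))
    (hlam : ∀ n : ℕ, Tendsto (fun N : ℕ => ∑ k ∈ Finset.Ioc n N, b k)
      atTop (nhds (-(lam n))))
    (hkap : ∀ n : ℕ, Tendsto (fun N : ℕ => ∑ k ∈ Finset.Ioc n N, (a k ^ 2 - 1))
      atTop (nhds (-(kap n)))) :
    ∀ n : ℕ,
      Tendsto (fun N : ℕ => ∑ k ∈ Finset.Ico n N, Kterm α k)
        atTop (nhds (kap n - α (2 * (n : ℤ) - 1))) ∧
      Tendsto (fun N : ℕ => ∑ k ∈ Finset.Ico n N, Lterm α k)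
        atTop (nhds (lam n - α (2 * (n : ℤ) - 2))) := by
  intro n
  exact ⟨tendsto_sum_Ico_of_eq_sub_sub (fun k => by rw [Kterm_eq, ha])
      (tendsto_comp_two_mul_sub hα0 1) n (hkap n),
    tendsto_sum_Ico_of_eq_sub_sub (fun k => by rw [Lterm_eq, hb])
      (tendsto_comp_two_mul_sub hα0 2) n (hlam n)⟩

/-- Under the Geronimus relations (with `α_n ∈ (-1,1)` for `n ≥ 0`, `α₋₁ = -1`,
`α_n = 0` for `n < -1`, `α_n → 0`, `a_n > 0`, and the tail sums
`λ_n = -∑_{k>n} b_k`, `κ_n = -∑_{k>n}(a_k² - 1)` convergent), one has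
`κ_n = α_{2n-1} + K(α)_n` and `λ_n = α_{2n-2} + L(α)_n`, where the series `K(α)_n`
and `L(α)_n` converge. -/
theorem expanded_lambda_kappa (α : ℤ → ℝ) (a b lam kap : ℕ → ℝ)
    (hIoo : ∀ n : ℤ, 0 ≤ n → α n ∈ Set.Ioo (-1 : ℝ) 1)
    (hm1 : α (-1) = -1) (hneg : ∀ n : ℤ, n < -1 → α n = 0)
    (hα0 : Tendsto (fun n : ℕ => α (n : ℤ)) atTop (nhds 0))
    (hapos : ∀ n : ℕ, 0 < a n)
    (ha : ∀ n : ℕ, a (n + 1) ^ 2 =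
      (1 - α (2 * (n : ℤ) - 1)) * (1 - α (2 * (n : ℤ)) ^ 2) * (1 + α (2 * (n : ℤ) + 1)))
    (hb : ∀ n : ℕ, b (n + 1) =
      (1 - α (2 * (n : ℤ) - 1)) * α (2 * (n : ℤ)) -
        (1 + α (2 * (n : ℤ) - 1)) * α (2 * (n : ℤ) - 2))
    (hlam : ∀ n : ℕ, Tendsto (fun N : ℕ => ∑ k ∈ Finset.Ioc n N, b k)
      atTop (nhds (-(lam n))))
    (hkap : ∀ n : ℕ, Tendsto (fun N : ℕ => ∑ k ∈ Finset.Ioc n N, (a k ^ 2 - 1))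
      atTop (nhds (-(kap n)))) :
    ∀ n : ℕ,
      Tendsto (fun N : ℕ => ∑ k ∈ Finset.Ico n N, Kterm α k)
        atTop (nhds (kap n - α (2 * (n : ℤ) - 1))) ∧
      Tendsto (fun N : ℕ => ∑ k ∈ Finset.Ico n N, Lterm α k)
        atTop (nhds (lam n - α (2 * (n : ℤ) - 2))) :=
  expanded_lambda_kappa_general α a b lam kap hα0 ha hb hlam hkap
end

section
/- Let F(z) = ∫ (e^{iθ}+z)/(e^{iθ}−z) dμ(θ) be the Carathéodory function of a conjugation-invariant probability measure μ on ∂𝔻, and let ν = Sz(μ) with m-function m and M(z) = −m(z + 1/z). If M has no poles in 𝔻 (equivalently, the Jacobi matrix for ν has no eigenvalues off [-2,2]), then M(z) = −F(z)/(z − z^{-1}) for z ∈ 𝔻 \ {0}. -/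
/-!
Writing `u = e^{iθ}`, one has `2 cos θ - (z + z⁻¹) = (u - z)(u z - 1)/(u z)`, and with this
factorization the Carathéodory kernels at `u` and at `ū = u⁻¹` add up to
`2 (z - z⁻¹) / (2 cos θ - (z + z⁻¹))`. Conjugation invariance of `μ` makes both kernels have the
same integral, so `F(z) = (z - z⁻¹) m(z + z⁻¹)`.
-/

open MeasureTheory Real

theorem caratheodory_kernel_add_inv {K : Type*} [Field K] {u z : K} (hu : u ≠ 0) (hz : z ≠ 0)
    (huz : u ≠ z) (huz' : u⁻¹ ≠ z) :
    (u + z) / (u - z) + (u⁻¹ + z) / (u⁻¹ - z) = 2 * (z - z⁻¹) * (u + u⁻¹ - (z + z⁻¹))⁻¹ := by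
  have h₁ : u - z ≠ 0 := sub_ne_zero.mpr huz
  have h₂ : u * z - 1 ≠ 0 := fun h =>
    huz' (by rw [eq_comm, ← mul_eq_one_iff_eq_inv₀ hu, mul_comm]; exact sub_eq_zero.mp h)
  have hfac : u + u⁻¹ - (z + z⁻¹) = (u - z) * (u * z - 1) / (u * z) := by
    field_simp; ring
  have h₃ : u⁻¹ - z = -(u * z - 1) / u := by field_simp; ring
  rw [hfac, h₃]
  field_simp
  ring

theorem norm_div_sub_le_of_norm_eq_one {𝕜 : Type*} [NormedField 𝕜] {u z : 𝕜} (hu : ‖u‖ = 1)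
    (hz : ‖z‖ < 1) : ‖(u + z) / (u - z)‖ ≤ (1 + ‖z‖) / (1 - ‖z‖) := by
  rw [norm_div]
  refine div_le_div₀ (by positivity) (hu ▸ norm_add_le u z) (by linarith) ?_
  simpa [hu] using norm_sub_norm_le u z

theorem integrable_caratheodory_kernel {α : Type*} [MeasurableSpace α] (μ : Measure α)
    [IsFiniteMeasure μ] {f : α → ℂ} (hf : Measurable f) (hf₁ : ∀ a, ‖f a‖ = 1) {z : ℂ}
    (hz : ‖z‖ < 1) : Integrable (fun a => (f a + z) / (f a - z)) μ :=
  .of_bound ((hf.add_const z).div (hf.sub_const z)).aestronglyMeasurable _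
    (.of_forall fun a => norm_div_sub_le_of_norm_eq_one (hf₁ a) hz)

theorem integral_comp_exp_mul_I_inv {E : Type*} [NormedAddCommGroup E] [NormedSpace ℝ E]
    {μ : Measure ℝ} (hinv : μ.map (fun θ => 2 * π - θ) = μ) (g : ℂ → E) :
    ∫ θ, g (Complex.exp (θ * Complex.I))⁻¹ ∂μ = ∫ θ, g (Complex.exp (θ * Complex.I)) ∂μ := by
  conv_rhs => rw [← hinv]
  rw [show (fun θ : ℝ => 2 * π - θ) = MeasurableEquiv.subLeft (2 * π) from rfl,
    integral_map_equiv]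
  congr 1 with θ
  change _ = g (Complex.exp (((2 * π - θ : ℝ) : ℂ) * Complex.I))
  push_cast
  rw [sub_mul, Complex.exp_sub, Complex.exp_two_pi_mul_I, one_div]

theorem sub_inv_ne_zero_of_norm_lt_one {𝕜 : Type*} [NormedField 𝕜] {z : 𝕜} (hz₀ : z ≠ 0)
    (hz₁ : ‖z‖ < 1) : z - z⁻¹ ≠ 0 := by
  intro h
  have : z * z = 1 := by
    have := mul_inv_cancel₀ hz₀
    rwa [← sub_eq_zero.mp h] at this
  have : ‖z‖ * ‖z‖ = 1 := by rw [← norm_mul, this, norm_one]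
  nlinarith [norm_nonneg z]

theorem integral_caratheodory_kernel_eq (μ : Measure ℝ) [IsFiniteMeasure μ]
    (hinv : μ.map (fun θ => 2 * π - θ) = μ) {z : ℂ} (hz₀ : z ≠ 0) (hz₁ : ‖z‖ < 1) :
    ∫ θ, (Complex.exp (θ * Complex.I) + z) / (Complex.exp (θ * Complex.I) - z) ∂μ =
      (z - z⁻¹) * ∫ θ, ((2 * Real.cos θ : ℝ) - (z + z⁻¹) : ℂ)⁻¹ ∂μ := by
  set e : ℝ → ℂ := fun θ => Complex.exp (θ * Complex.I)
  have he : Measurable e := by fun_prop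
  have he₁ (θ : ℝ) : ‖e θ‖ = 1 := Complex.norm_exp_ofReal_mul_I θ
  have he₁' (θ : ℝ) : ‖(e θ)⁻¹‖ = 1 := by rw [norm_inv, he₁, inv_one]
  have hne {u : ℂ} (hu : ‖u‖ = 1) : u ≠ z := fun h => by rw [h] at hu; linarith
  have hkernel (θ : ℝ) : (e θ + z) / (e θ - z) + ((e θ)⁻¹ + z) / ((e θ)⁻¹ - z) =
      2 * (z - z⁻¹) * ((2 * Real.cos θ : ℝ) - (z + z⁻¹) : ℂ)⁻¹ := by
    rw [caratheodory_kernel_add_inv (Complex.exp_ne_zero _) hz₀ (hne (he₁ θ)) (hne (he₁' θ))]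
    simp [Complex.ofReal_cos, Complex.two_cos, Complex.exp_neg]
  have hsym : ∫ θ, ((e θ)⁻¹ + z) / ((e θ)⁻¹ - z) ∂μ = ∫ θ, (e θ + z) / (e θ - z) ∂μ :=
    integral_comp_exp_mul_I_inv hinv fun u => (u + z) / (u - z)
  have h2F : 2 * ∫ θ, (e θ + z) / (e θ - z) ∂μ =
      2 * ((z - z⁻¹) * ∫ θ, ((2 * Real.cos θ : ℝ) - (z + z⁻¹) : ℂ)⁻¹ ∂μ) := by
    calc 2 * ∫ θ, (e θ + z) / (e θ - z) ∂μ
        = ∫ θ, ((e θ + z) / (e θ - z) + ((e θ)⁻¹ + z) / ((e θ)⁻¹ - z)) ∂μ := by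
          rw [integral_add (integrable_caratheodory_kernel μ he he₁ hz₁)
            (integrable_caratheodory_kernel μ (f := fun θ => (e θ)⁻¹) (by fun_prop) he₁' hz₁),
            hsym, two_mul]
      _ = _ := by simp_rw [hkernel, integral_const_mul, mul_assoc]
  exact mul_left_cancel₀ two_ne_zero h2F

theorem M_eq_neg_F_div_general (μ : Measure ℝ) [IsProbabilityMeasure μ]
    (hinv : μ.map (fun θ => 2 * π - θ) = μ) :
    ∀ z : ℂ, z ≠ 0 → ‖z‖ < 1 →
      -(∫ x : ℝ, ((x : ℂ) - (z + z⁻¹))⁻¹ ∂(μ.map fun θ => 2 * Real.cos θ)) =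
        -(∫ θ : ℝ, (Complex.exp ((θ : ℂ) * Complex.I) + z) /
            (Complex.exp ((θ : ℂ) * Complex.I) - z) ∂μ) / (z - z⁻¹) := by
  intro z hz₀ hz₁
  rw [integral_map (by fun_prop) (by fun_prop), integral_caratheodory_kernel_eq μ hinv hz₀ hz₁,
    neg_div, mul_div_cancel_left₀ _ (sub_inv_ne_zero_of_norm_lt_one hz₀ hz₁)]

/-- For a conjugation-invariant probability measure `μ` on the circle
(realized on `[0, 2π)`) with Szegő image `ν = μ ∘ (θ ↦ 2cos θ)⁻¹`,
`m(E) = ∫ dν(x)/(x - E)` and `M(z) = -m(z + 1/z)` (which has no poles in `𝔻`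
since `ν` is supported in `[-2,2]`), one has
`M(z) = -F(z)/(z - z⁻¹)` on `𝔻 \ {0}`, where `F` is the Carathéodory function
of `μ`. -/
theorem M_eq_neg_F_div (μ : Measure ℝ) [IsProbabilityMeasure μ]
    (hsupp : μ (Set.Ico 0 (2 * π))ᶜ = 0)
    (hinv : μ.map (fun θ => 2 * π - θ) = μ) :
    ∀ z : ℂ, z ≠ 0 → ‖z‖ < 1 →
      -(∫ x : ℝ, ((x : ℂ) - (z + z⁻¹))⁻¹ ∂(μ.map fun θ => 2 * Real.cos θ)) =
        -(∫ θ : ℝ, (Complex.exp ((θ : ℂ) * Complex.I) + z) /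
            (Complex.exp ((θ : ℂ) * Complex.I) - z) ∂μ) / (z - z⁻¹) :=
  M_eq_neg_F_div_general μ hinv
end
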